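/- arXiv:2104.09781 — 7 statements merged into one kernel-verified Lean document; each statement's English description precedes it below -/
import Mathlib

section
/- Let A be a unital associative ring satisfying the Grassmann identity [[a,b],c] = 0 for all a, b, c ∈ A, where [u,v] = uv − vu. Then for all a, b, c, d ∈ A one has [a,b]·[c,d] = −[a,c]·[b,d]. -/
/-- In a unital associative ring satisfying the Grassmann identity `[[a,b],c] = 0`,
one has `[a,b]·[c,d] = −[a,c]·[b,d]` for all elements `a, b, c, d`. -/
theorem commutator_product_antisymm (A : Type*) [Ring A]
    (hG : ∀ a b c : A, (a * b - b * a) * c - c * (a * b - b * a) = 0) :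
    ∀ a b c d : A,
      (a * b - b * a) * (c * d - d * c) = -((a * c - c * a) * (b * d - d * b)) := by
  intro a b c d
  linear_combination (norm := noncomm_ring) hG a (b*c) d + hG a c (b*d) - hG a c (d*b) - b * hG a c d - hG a b d * c
end

section
/- Let A be a unital associative ring satisfying the Grassmann identity [[a,b],c] = 0 for all a, b, c ∈ A, where [u,v] = uv − vu. Then for all a, b, c, d ∈ A, if two of the four elements a, b, c, d are equal (i.e., a, b, c, d are not pairwise distinct), then [a,b]·[c,d] = 0. -/
/-- Key lemma: in a ring with central commutators, `[a,b]·[a,c] = 0`. -/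
theorem comm_sq_key (A : Type*) [Ring A]
    (hG : ∀ a b c : A, (a * b - b * a) * c - c * (a * b - b * a) = 0) :
    ∀ a b c : A, (a * b - b * a) * (a * c - c * a) = 0 := by
  intro x y z
  linear_combination (norm := noncomm_ring) hG x y x * z - hG x y z * x - z * hG x y x + hG x (x * y) z

/-- In a unital associative ring satisfying the Grassmann identity `[[a,b],c] = 0`,
if two of the four elements `a, b, c, d` coincide, then `[a,b]·[c,d] = 0`. -/
theorem commutator_product_eq_zero_of_not_pairwise_distinct (A : Type*) [Ring A]
    (hG : ∀ a b c : A, (a * b - b * a) * c - c * (a * b - b * a) = 0) :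
    ∀ a b c d : A, (a = b ∨ a = c ∨ a = d ∨ b = c ∨ b = d ∨ c = d) →
      (a * b - b * a) * (c * d - d * c) = 0 := by
  have key := comm_sq_key A hG
  rintro a b c d (rfl | rfl | rfl | rfl | rfl | rfl)
  · simp
  · linear_combination (norm := noncomm_ring) key a b d
  · linear_combination (norm := noncomm_ring) -(key a b c)
  · linear_combination (norm := noncomm_ring) -(key b a d)
  · linear_combination (norm := noncomm_ring) key b a c
  · simp
end

section
/- In F_3, for all i, j ∈ {1,2,3} and every element w of the commutator ideal F_3', one has x_i x_j w = x_j x_i w; consequently, left multiplication by the generators defines a commuting family of operators on F_3'. -/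
/-- The Grassmann relation on the free algebra on three generators. -/
def GrassRel3 (K : Type*) [Field K] (x y : FreeAlgebra K (Fin 3)) : Prop :=
  ∃ a b c : FreeAlgebra K (Fin 3), x = (a * b - b * a) * c - c * (a * b - b * a) ∧ y = 0

/-- The relatively free algebra of rank 3 in the variety generated by Grassmann algebras. -/
abbrev F3 (K : Type*) [Field K] := RingQuot (GrassRel3 K)

/-- The generators of `F3`. -/
noncomputable def X3 (K : Type*) [Field K] (i : Fin 3) : F3 K :=
  RingQuot.mkAlgHom K (GrassRel3 K) (FreeAlgebra.ι K i)

/-- The commutator ideal of `F3`: the two-sided ideal generated by all commutators. -/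
noncomputable def commIdeal3 (K : Type*) [Field K] : TwoSidedIdeal (F3 K) :=
  TwoSidedIdeal.span {x | ∃ u v : F3 K, x = u * v - v * u}

section generic
variable {R : Type*} [Ring R]

/-- Leibniz-type expansion using centrality of commutators. -/
theorem Gcomm_mul (Hcent : ∀ a b c : R, (a * b - b * a) * c = c * (a * b - b * a))
    (u v w : R) :
    (u * v) * w - w * (u * v) = u * (v * w - w * v) + v * (u * w - w * u) := by
  linear_combination (norm := noncomm_ring) Hcent u w v

/-- The swap identity: `[a,c][b,d] + [b,c][a,d] = 0`. -/
theorem Gswap (Hcent : ∀ a b c : R, (a * b - b * a) * c = c * (a * b - b * a))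
    (a b c d : R) :
    (a * c - c * a) * (b * d - d * b) + (b * c - c * b) * (a * d - d * a) = 0 := by
  have h1 := Gcomm_mul Hcent (a * b) c d
  have h1' := Gcomm_mul Hcent a b d
  have h2 := Gcomm_mul Hcent a (b * c) d
  have h2' := Gcomm_mul Hcent b c d
  linear_combination (norm := noncomm_ring) (h1 + c * h1') - (h2 + a * h2')

/-- Equal first arguments kill the product of two commutators. -/
theorem Gquad_ac (Hcent : ∀ a b c : R, (a * b - b * a) * c = c * (a * b - b * a))
    (Hhalf : ∀ x : R, x + x = 0 → x = 0) (a b d : R) :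
    (a * b - b * a) * (a * d - d * a) = 0 := by
  apply Hhalf
  have h := Gswap Hcent a a b d
  linear_combination (norm := noncomm_ring) h

/-- Product of two commutators vanishes whenever two of the four entries coincide. -/
theorem Gquad (Hcent : ∀ a b c : R, (a * b - b * a) * c = c * (a * b - b * a))
    (Hhalf : ∀ x : R, x + x = 0 → x = 0) (a b c d : R)
    (h : a = b ∨ c = d ∨ a = c ∨ a = d ∨ b = c ∨ b = d) :
    (a * b - b * a) * (c * d - d * c) = 0 := by
  rcases h with rfl | rfl | rfl | rfl | rfl | rfl
  · rw [sub_self, zero_mul]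
  · rw [sub_self, mul_zero]
  · exact Gquad_ac Hcent Hhalf a b d
  · have h := Gswap Hcent a c b a
    linear_combination (norm := noncomm_ring) h
  · have h := Gswap Hcent a b b d
    linear_combination (norm := noncomm_ring) h
  · have h := Gquad_ac Hcent Hhalf b a c
    linear_combination (norm := noncomm_ring) h

/-- Inductive step for products. -/
theorem Gstep (Hcent : ∀ a b c : R, (a * b - b * a) * c = c * (a * b - b * a))
    (C u1 u2 v : R) (hcent : ∀ w : R, C * w = w * C)
    (h1 : C * (u1 * v - v * u1) = 0) (h2 : C * (u2 * v - v * u2) = 0) :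
    C * ((u1 * u2) * v - v * (u1 * u2)) = 0 := by
  have e := Gcomm_mul Hcent u1 u2 v
  rw [e, mul_add, ← mul_assoc C u1, hcent u1, mul_assoc, h2,
    ← mul_assoc C u2, hcent u2, mul_assoc, h1, mul_zero, mul_zero, add_zero]

/-- Flipping a commutator preserves vanishing. -/
theorem Gflip (C u v : R) (h : C * (u * v - v * u) = 0) :
    C * (v * u - u * v) = 0 := by
  rw [← neg_sub (u * v) (v * u), mul_neg, h, neg_zero]

/-- Additivity step. -/
theorem Gadd (C u1 u2 v : R)
    (h1 : C * (u1 * v - v * u1) = 0) (h2 : C * (u2 * v - v * u2) = 0) :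
    C * ((u1 + u2) * v - v * (u1 + u2)) = 0 := by
  have e : (u1 + u2) * v - v * (u1 + u2) = (u1 * v - v * u1) + (u2 * v - v * u2) := by
    noncomm_ring
  rw [e, mul_add, h1, h2, add_zero]

/-- Scalar (commuting-element) case. -/
theorem Gscalar (C s v : R) (h : s * v = v * s) : C * (s * v - v * s) = 0 := by
  rw [h, sub_self, mul_zero]

theorem Gnegmem (C x : R) (h : C * x = 0) : C * -x = 0 := by
  rw [mul_neg, h, neg_zero]

theorem Gaddmem (C x y : R) (hx : C * x = 0) (hy : C * y = 0) : C * (x + y) = 0 := by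
  rw [mul_add, hx, hy, add_zero]

theorem Gmulleft (C x y : R) (hcent : ∀ w : R, C * w = w * C) (hy : C * y = 0) :
    C * (x * y) = 0 := by
  rw [← mul_assoc, hcent x, mul_assoc, hy, mul_zero]

theorem Gmulright (C x y : R) (hx : C * x = 0) : C * (x * y) = 0 := by
  rw [← mul_assoc, hx, zero_mul]

theorem Gfinal (x y w : R) (h : (x * y - y * x) * w = 0) :
    x * (y * w) = y * (x * w) := by
  linear_combination (norm := noncomm_ring) h

end generic

section aux
variable {K : Type*} [Field K] [CharZero K]

/-- In `F3` every commutator is central. -/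
lemma F3central (a b c : F3 K) : (a * b - b * a) * c = c * (a * b - b * a) := by
  obtain ⟨a, rfl⟩ := RingQuot.mkAlgHom_surjective K (GrassRel3 K) a
  obtain ⟨b, rfl⟩ := RingQuot.mkAlgHom_surjective K (GrassRel3 K) b
  obtain ⟨c, rfl⟩ := RingQuot.mkAlgHom_surjective K (GrassRel3 K) c
  have h := RingQuot.mkAlgHom_rel K (s := GrassRel3 K) ⟨a, b, c, rfl, rfl⟩
  simp only [map_sub, map_mul, map_zero] at h
  exact sub_eq_zero.mp h

/-- Halving lemma (char 0). -/
lemma F3half (X : F3 K) (h : X + X = 0) : X = 0 := by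
  have h2 : (2 : K) • X = 0 := by rw [two_smul]; exact h
  have := congrArg (fun y => ((2 : K)⁻¹) • y) h2
  simpa [smul_smul] using this

/-- Products of commutators of generators vanish (pigeonhole on three indices). -/
lemma F3gen (i j s t : Fin 3) :
    (X3 K i * X3 K j - X3 K j * X3 K i) * (X3 K s * X3 K t - X3 K t * X3 K s) = 0 := by
  have hp : ∀ i j s t : Fin 3,
      i = j ∨ s = t ∨ i = s ∨ i = t ∨ j = s ∨ j = t := by decide
  apply Gquad F3central F3half
  rcases hp i j s t with h | h | h | h | h | h <;> rw [h] <;> tauto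

/-- The generator commutators annihilate all commutators. -/
lemma F3key (i j : Fin 3) (u v : F3 K) :
    (X3 K i * X3 K j - X3 K j * X3 K i) * (u * v - v * u) = 0 := by
  set C := X3 K i * X3 K j - X3 K j * X3 K i with hC
  have hcent : ∀ w : F3 K, C * w = w * C := fun w => F3central _ _ w
  have base : ∀ k : Fin 3, ∀ v : F3 K,
      C * (X3 K k * v - v * X3 K k) = 0 := by
    intro k v
    obtain ⟨v, rfl⟩ := RingQuot.mkAlgHom_surjective K (GrassRel3 K) v
    induction v using FreeAlgebra.induction with
    | grade0 r =>
        rw [AlgHom.commutes]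
        exact Gscalar C _ _ (Algebra.commutes r (X3 K k)).symm
    | grade1 x =>
        exact F3gen i j k x
    | mul a b ha hb =>
        rw [map_mul]
        exact Gflip C _ _
          (Gstep F3central C _ _ (X3 K k) hcent (Gflip C _ _ ha) (Gflip C _ _ hb))
    | add a b ha hb =>
        rw [map_add]
        exact Gflip C _ _ (Gadd C _ _ (X3 K k) (Gflip C _ _ ha) (Gflip C _ _ hb))
  obtain ⟨u, rfl⟩ := RingQuot.mkAlgHom_surjective K (GrassRel3 K) u
  induction u using FreeAlgebra.induction with
  | grade0 r =>
      rw [AlgHom.commutes]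
      exact Gscalar C _ _ (Algebra.commutes r v)
  | grade1 x => exact base x v
  | mul a b ha hb =>
      rw [map_mul]
      exact Gstep F3central C _ _ v hcent ha hb
  | add a b ha hb =>
      rw [map_add]
      exact Gadd C _ _ v ha hb

/-- The generator commutators annihilate the whole commutator ideal. -/
lemma F3ann (i j : Fin 3) (w : F3 K) (hw : w ∈ commIdeal3 K) :
    (X3 K i * X3 K j - X3 K j * X3 K i) * w = 0 := by
  set C := X3 K i * X3 K j - X3 K j * X3 K i with hC
  have hcent : ∀ w : F3 K, C * w = w * C := fun w => F3central _ _ w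
  rw [commIdeal3, TwoSidedIdeal.mem_span_iff] at hw
  let I : TwoSidedIdeal (F3 K) := TwoSidedIdeal.mk' {x : F3 K | C * x = 0}
    (mul_zero C)
    (fun {x y} hx hy => Gaddmem C x y hx hy)
    (fun {x} hx => Gnegmem C x hx)
    (fun {x y} hy => Gmulleft C x y hcent hy)
    (fun {x y} hx => Gmulright C x y hx)
  have := hw I (by
    rintro x ⟨u, v, rfl⟩
    rw [SetLike.mem_coe, TwoSidedIdeal.mem_mk']
    exact F3key i j u v)
  rwa [TwoSidedIdeal.mem_mk'] at this

end aux

/-- In `F3`, left multiplications by the generators commute on the commutator ideal: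
`xᵢ xⱼ w = xⱼ xᵢ w` for every `w ∈ F3'`. -/
theorem gen_mul_comm_on_commIdeal (K : Type*) [Field K] [CharZero K] :
    ∀ i j : Fin 3, ∀ w ∈ commIdeal3 K,
      X3 K i * (X3 K j * w) = X3 K j * (X3 K i * w) := by
  intro i j w hw
  exact Gfinal _ _ _ (F3ann i j w hw)
end

section
/- In F_3, the commutator ideal squares to zero: for all w_1, w_2 ∈ F_3' one has w_1 · w_2 = 0. In particular [u,v]·w = 0 for all u, v ∈ F_3 and w ∈ F_3'. -/
/-! ### Generic ring lemmas

We first prove, over an arbitrary (noncommutative) ring, the consequences of the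
hypothesis "all commutators are central" that we need.  Working over a generic
ring lets `noncomm_ring` do the normalization. -/

section generic

variable {R : Type*} [Ring R]

private lemma gswap (a b c d : R)
    (h1 : (a * (b * c) - b * c * a) * d = d * (a * (b * c) - b * c * a))
    (h2 : (a * c - c * a) * d = d * (a * c - c * a))
    (h3 : (a * b - b * a) * d = d * (a * b - b * a))
    (h4 : (b * d - d * b) * (a * c - c * a) = (a * c - c * a) * (b * d - d * b)) :
    (a * b - b * a) * (c * d - d * c) = -((a * c - c * a) * (b * d - d * b)) := by
  linear_combination (norm := noncomm_ring) h1 - b * h2 - h3 * c - h4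

private lemma gneg_right (x c a : R) (h : x * (a * c - c * a) = 0) :
    x * (c * a - a * c) = 0 := by
  linear_combination (norm := noncomm_ring) -h

private lemma gneg_left (a b : R) (y : R) (h : (b * a - a * b) * y = 0) :
    (a * b - b * a) * y = 0 := by
  linear_combination (norm := noncomm_ring) -h

private lemma gmul1 (p q X γ : R) (hγq : γ * q = q * γ)
    (hx : (p * X - X * p) * γ = 0) (hy : (q * X - X * q) * γ = 0) :
    (p * q * X - X * (p * q)) * γ = 0 := by
  linear_combination (norm := noncomm_ring) p * hy + hx * q - (p * X - X * p) * hγq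

private lemma gmul2 (u p q γ : R) (hγq : γ * q = q * γ)
    (hx : (u * p - p * u) * γ = 0) (hy : (u * q - q * u) * γ = 0) :
    (u * (p * q) - p * q * u) * γ = 0 := by
  linear_combination (norm := noncomm_ring) hx * q + p * hy - (u * p - p * u) * hγq

private lemma gadd1 (p q X γ : R)
    (hx : (p * X - X * p) * γ = 0) (hy : (q * X - X * q) * γ = 0) :
    ((p + q) * X - X * (p + q)) * γ = 0 := by
  linear_combination (norm := noncomm_ring) hx + hy

private lemma gadd2 (u p q γ : R)
    (hx : (u * p - p * u) * γ = 0) (hy : (u * q - q * u) * γ = 0) :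
    (u * (p + q) - (p + q) * u) * γ = 0 := by
  linear_combination (norm := noncomm_ring) hx + hy

private lemma gscal1 (s x γ : R) (h : s * x = x * s) : (s * x - x * s) * γ = 0 := by
  rw [h, sub_self, zero_mul]

private lemma gmulneg (k x : R) (h : k * x = 0) : k * (-x) = 0 := by
  rw [mul_neg, h, neg_zero]

private lemma gnegmul (x y : R) (h : x * y = 0) : (-x) * y = 0 := by
  rw [neg_mul, h, neg_zero]

private lemma gscal2 (s x γ : R) (h : s * x = x * s) : (x * s - s * x) * γ = 0 := by
  rw [h, sub_self, zero_mul]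

end generic

section aux

variable (K : Type*) [Field K]

/-- Commutators are central in `F3`. -/
lemma F3.central (u v w : F3 K) : (u * v - v * u) * w = w * (u * v - v * u) := by
  obtain ⟨a, rfl⟩ := RingQuot.mkAlgHom_surjective K (GrassRel3 K) u
  obtain ⟨b, rfl⟩ := RingQuot.mkAlgHom_surjective K (GrassRel3 K) v
  obtain ⟨c, rfl⟩ := RingQuot.mkAlgHom_surjective K (GrassRel3 K) w
  have h : RingQuot.mkAlgHom K (GrassRel3 K) ((a * b - b * a) * c - c * (a * b - b * a))
      = RingQuot.mkAlgHom K (GrassRel3 K) 0 :=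
    RingQuot.mkAlgHom_rel K ⟨a, b, c, rfl, rfl⟩
  simp only [map_sub, map_mul, map_zero] at h
  exact sub_eq_zero.mp h

lemma F3.swap (a b c d : F3 K) :
    (a * b - b * a) * (c * d - d * c) = -((a * c - c * a) * (b * d - d * b)) :=
  gswap a b c d (F3.central K a (b * c) d) (F3.central K a c d) (F3.central K a b d)
    (F3.central K b d (a * c - c * a))

lemma F3.rep1 (a b c : F3 K) : (a * b - b * a) * (a * c - c * a) = 0 := by
  have h := F3.swap K a b a c
  rw [sub_self, zero_mul, neg_zero] at h
  exact h

lemma F3.reps (a b c d : F3 K)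
    (h : a = b ∨ c = d ∨ a = c ∨ a = d ∨ b = c ∨ b = d) :
    (a * b - b * a) * (c * d - d * c) = 0 := by
  rcases h with rfl | rfl | rfl | rfl | rfl | rfl
  · rw [sub_self, zero_mul]
  · rw [sub_self, mul_zero]
  · exact F3.rep1 K a b d
  · exact gneg_right _ _ _ (F3.rep1 K a b c)
  · exact gneg_left _ _ _ (F3.rep1 K b a d)
  · exact gneg_right _ _ _ (gneg_left _ _ _ (F3.rep1 K b a c))

lemma F3.gen_prod (i j k l : Fin 3) :
    (X3 K i * X3 K j - X3 K j * X3 K i) * (X3 K k * X3 K l - X3 K l * X3 K k) = 0 := by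
  have h : i = j ∨ k = l ∨ i = k ∨ i = l ∨ j = k ∨ j = l := by omega
  refine F3.reps K _ _ _ _ ?_
  rcases h with h | h | h | h | h | h
  exacts [Or.inl (by rw [h]), Or.inr (Or.inl (by rw [h])),
    Or.inr (Or.inr (Or.inl (by rw [h]))),
    Or.inr (Or.inr (Or.inr (Or.inl (by rw [h])))),
    Or.inr (Or.inr (Or.inr (Or.inr (Or.inl (by rw [h]))))),
    Or.inr (Or.inr (Or.inr (Or.inr (Or.inr (by rw [h])))))]

/-- Extension lemma: if a central element `γ` is annihilated (on the left) by all
commutators of generators, then it is annihilated by all commutators. -/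
lemma F3.ext_lemma (γ : F3 K) (hc : ∀ x : F3 K, γ * x = x * γ)
    (hb : ∀ i j : Fin 3, (X3 K i * X3 K j - X3 K j * X3 K i) * γ = 0) :
    ∀ u v : F3 K, (u * v - v * u) * γ = 0 := by
  have step1 : ∀ (u : F3 K) (j : Fin 3), (u * X3 K j - X3 K j * u) * γ = 0 := by
    intro u j
    obtain ⟨x, rfl⟩ := RingQuot.mkAlgHom_surjective K (GrassRel3 K) u
    induction x using FreeAlgebra.induction with
    | grade0 r =>
      rw [AlgHom.commutes]
      exact gscal1 _ _ _ (Algebra.commutes r (X3 K j))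
    | grade1 i => exact hb i j
    | mul x y hx hy =>
      rw [map_mul]
      exact gmul1 _ _ _ _ (hc _) hx hy
    | add x y hx hy =>
      rw [map_add]
      exact gadd1 _ _ _ _ hx hy
  intro u v
  obtain ⟨y, rfl⟩ := RingQuot.mkAlgHom_surjective K (GrassRel3 K) v
  induction y using FreeAlgebra.induction with
  | grade0 r =>
    rw [AlgHom.commutes]
    exact gscal2 _ _ _ (Algebra.commutes r u)
  | grade1 j => exact step1 u j
  | mul x y hx hy =>
    rw [map_mul]
    exact gmul2 _ _ _ _ (hc _) hx hy
  | add x y hx hy =>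
    rw [map_add]
    exact gadd2 _ _ _ _ hx hy

lemma F3.prod_gen (i j : Fin 3) (w z : F3 K) :
    (w * z - z * w) * (X3 K i * X3 K j - X3 K j * X3 K i) = 0 :=
  F3.ext_lemma K _ (fun x => F3.central K (X3 K i) (X3 K j) x)
    (fun k l => F3.gen_prod K k l i j) w z

/-- Products of two commutators vanish in `F3`. -/
lemma F3.prod_zero (u v w z : F3 K) :
    (u * v - v * u) * (w * z - z * w) = 0 := by
  refine F3.ext_lemma K _ (fun x => F3.central K w z x) (fun i j => ?_) u v
  rw [F3.central]
  exact F3.prod_gen K i j w z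

end aux

/-- In `F3`, the commutator ideal squares to zero; in particular `[u,v]·w = 0`
for all `u, v ∈ F3` and `w ∈ F3'`. -/
theorem commIdeal3_sq_zero (K : Type*) [Field K] [CharZero K] :
    (∀ w₁ ∈ commIdeal3 K, ∀ w₂ ∈ commIdeal3 K, w₁ * w₂ = 0) ∧
      (∀ u v : F3 K, ∀ w ∈ commIdeal3 K, (u * v - v * u) * w = 0) := by
  have part2 : ∀ u v : F3 K, ∀ w ∈ commIdeal3 K, (u * v - v * u) * w = 0 := by
    intro u v w hw
    let J : TwoSidedIdeal (F3 K) := TwoSidedIdeal.mk'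
      {w : F3 K | (u * v - v * u) * w = 0}
      (mul_zero _)
      (fun {x y} hx hy => by
        show (u * v - v * u) * (x + y) = 0
        rw [mul_add, hx, hy, add_zero])
      (fun {x} hx => by
        exact gmulneg _ _ hx)
      (fun {x y} hy => by
        show (u * v - v * u) * (x * y) = 0
        calc (u * v - v * u) * (x * y) = ((u * v - v * u) * x) * y := (mul_assoc _ _ _).symm
          _ = (x * (u * v - v * u)) * y := by rw [F3.central]
          _ = x * ((u * v - v * u) * y) := mul_assoc _ _ _
          _ = 0 := by rw [hy, mul_zero])
      (fun {x y} hx => by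
        show (u * v - v * u) * (x * y) = 0
        rw [← mul_assoc, hx, zero_mul])
    have hmem := TwoSidedIdeal.mem_span_iff.mp hw J (by
      rintro x ⟨u', v', rfl⟩
      rw [SetLike.mem_coe, TwoSidedIdeal.mem_mk']
      exact F3.prod_zero K u v u' v')
    rwa [TwoSidedIdeal.mem_mk'] at hmem
  refine ⟨?_, part2⟩
  intro w₁ h₁ w₂ h₂
  let J : TwoSidedIdeal (F3 K) := TwoSidedIdeal.mk'
    {w : F3 K | ∀ w' ∈ commIdeal3 K, w * w' = 0}
    (fun w' _ => zero_mul w')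
    (fun {x y} hx hy w' hw' => by rw [add_mul, hx w' hw', hy w' hw', add_zero])
    (fun {x} hx w' hw' => gnegmul _ _ (hx w' hw'))
    (fun {x y} hy w' hw' => by rw [mul_assoc, hy w' hw', mul_zero])
    (fun {x y} hx w' hw' => by
      rw [mul_assoc]
      exact hx (y * w') (TwoSidedIdeal.mul_mem_left _ _ _ hw'))
  have hmem := TwoSidedIdeal.mem_span_iff.mp h₁ J (by
    rintro x ⟨u, v, rfl⟩
    rw [SetLike.mem_coe, TwoSidedIdeal.mem_mk']
    exact fun w' hw' => part2 u v w' hw')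
  rw [TwoSidedIdeal.mem_mk'] at hmem
  exact hmem w₂ h₂
end

section
/- An element f of the commutator ideal F_2' is fixed by the automorphism of F_2 exchanging x_1 and x_2 if and only if there exists a symmetric polynomial q ∈ K[x_1,x_2] such that f = L(q)·(x_2 − x_1)·[x_2,x_1]. Equivalently, the invariants of S_2 in F_2' form the left K[x_1,x_2]^{S_2}-module generated by the single element (x_2 − x_1)[x_2,x_1]. -/
/-- The Grassmann relation on the free algebra on two generators. -/
def GrassRel2 (K : Type*) [Field K] (x y : FreeAlgebra K (Fin 2)) : Prop :=
  ∃ a b c : FreeAlgebra K (Fin 2), x = (a * b - b * a) * c - c * (a * b - b * a) ∧ y = 0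

/-- The relatively free algebra of rank 2 in the variety generated by Grassmann algebras. -/
abbrev F2 (K : Type*) [Field K] := RingQuot (GrassRel2 K)

/-- The generators of `F2`. -/
noncomputable def X2 (K : Type*) [Field K] (i : Fin 2) : F2 K :=
  RingQuot.mkAlgHom K (GrassRel2 K) (FreeAlgebra.ι K i)

/-- The commutator ideal of `F2`: the two-sided ideal generated by all commutators. -/
noncomputable def commIdeal2 (K : Type*) [Field K] : TwoSidedIdeal (F2 K) :=
  TwoSidedIdeal.span {x | ∃ u v : F2 K, x = u * v - v * u}

/-- The `K`-linear substitution map `K[x₁,x₂] → F2` sending each monomial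
`x₁^a x₂^b` to the ordered product `x₁^a x₂^b` in `F2`. -/
noncomputable def L2 (K : Type*) [Field K] (p : MvPolynomial (Fin 2) K) : F2 K :=
  p.support.sum fun m => p.coeff m • (X2 K 0 ^ m 0 * X2 K 1 ^ m 1)

/-- `F2` satisfies the Grassmann identity. -/
theorem F2_grassmann (K : Type*) [Field K] (A B C : F2 K) :
    (A * B - B * A) * C - C * (A * B - B * A) = 0 := by
  obtain ⟨a, rfl⟩ := RingQuot.mkAlgHom_surjective K (GrassRel2 K) A
  obtain ⟨b, rfl⟩ := RingQuot.mkAlgHom_surjective K (GrassRel2 K) B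
  obtain ⟨c, rfl⟩ := RingQuot.mkAlgHom_surjective K (GrassRel2 K) C
  rw [← map_mul, ← map_mul, ← map_sub, ← map_mul, ← map_mul, ← map_sub]
  have : RingQuot.mkAlgHom K (GrassRel2 K) ((a * b - b * a) * c - c * (a * b - b * a)) =
      RingQuot.mkAlgHom K (GrassRel2 K) 0 :=
    RingQuot.mkAlgHom_rel K ⟨a, b, c, rfl, rfl⟩
  simpa using this

/-- The algebra automorphism of `F2` exchanging the two generators. -/
noncomputable def swapAut2 (K : Type*) [Field K] : F2 K →ₐ[K] F2 K :=
  RingQuot.liftAlgHom K ⟨FreeAlgebra.lift K fun i => X2 K (Equiv.swap 0 1 i), by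
    rintro x y ⟨a, b, c, rfl, rfl⟩
    simp only [map_sub, map_mul, map_zero]
    exact F2_grassmann K _ _ _⟩

/-!
Write `ω = [x₂, x₁]`. In `F2` all commutators are central, so `ω² = 0` (from
`[[x₂², x₁], x₁] = 2ω²`) and `x₂ x₁ᵃ = x₁ᵃ x₂ + a x₁ᵃ⁻¹ ω`; hence every element is
`L(p) + L(m) ω`, and a faithful model on `K[x₁,x₂] ⊕ K[x₁,x₂] ε` shows that `p` and `m` are
unique. Thus `F2' = {L(m) ω}`, and since `ω` kills `F2'`, `f ω = L(fᵃᵇ) ω` with `fᵃᵇ` the image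
of `f` in `K[x₁,x₂]`. The swap therefore sends `L(m) ω` to `-L(mˢ) ω`, so `L(m) ω` is fixed iff
`m` is antisymmetric, i.e. `m = (x₂ - x₁) q` with `q` symmetric (an antisymmetric `m` vanishes
on the diagonal).
-/

noncomputable section

open MvPolynomial

section CentralCommutator

variable {R : Type*} [Ring R]

theorem mul_pow_eq_pow_mul_add_nsmul {u v c : R} (hc : Commute u c) (h : v * u = u * v + c)
    (n : ℕ) : v * u ^ n = u ^ n * v + n • (u ^ (n - 1) * c) := by
  induction n with
  | zero => simp
  | succ n ih =>
    have hpow : n • (u ^ (n - 1) * c * u) = n • (u ^ n * c) := by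
      rcases n with _ | n
      · simp
      · rw [mul_assoc, ← hc.eq, ← mul_assoc, ← pow_succ, Nat.add_sub_cancel]
    calc v * u ^ (n + 1) = (v * u ^ n) * u := by rw [pow_succ, mul_assoc]
      _ = u ^ n * (v * u) + n • (u ^ (n - 1) * c * u) := by
        rw [ih, add_mul, smul_mul_assoc, mul_assoc]
      _ = u ^ (n + 1) * v + (n + 1) • (u ^ (n + 1 - 1) * c) := by
        rw [h, hpow, mul_add, ← mul_assoc, ← pow_succ, succ_nsmul, Nat.add_sub_cancel,
          add_assoc, add_comm (u ^ n * c)]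

/-- `[[b², a], a] = 2[a, b]²` once all commutators are central. -/
theorem two_nsmul_commutator_mul_self_eq_zero
    (hcen : ∀ a b c : R, Commute (a * b - b * a) c) (a b : R) :
    2 • ((a * b - b * a) * (a * b - b * a)) = 0 := by
  set z := a * b - b * a
  have hba : b * a = a * b - z := by rw [sub_sub_cancel]
  have hsq : b * b * a - a * (b * b) = -(2 • (b * z)) := by
    have : b * b * a = a * (b * b) - 2 • (b * z) := by
      rw [mul_assoc, hba, mul_sub, ← mul_assoc, hba, sub_mul, mul_assoc, (hcen a b b).eq,
        two_nsmul, sub_sub]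
    rw [this, sub_sub_cancel_left]
  have hgr : b * z * a - a * (b * z) = -(z * z) := by
    rw [mul_assoc, (hcen a b a).eq, ← mul_assoc, ← mul_assoc, ← sub_mul, ← neg_sub]
    exact neg_mul _ _
  have h := (hcen (b * b) a a).eq
  rw [hsq, neg_mul, mul_neg, neg_inj, smul_mul_assoc, mul_smul_comm, ← sub_eq_zero, ← smul_sub,
    hgr, smul_neg, neg_eq_zero] at h
  exact h

end CentralCommutator

namespace MvPolynomial

theorem X_sub_X_dvd_sub_rename_update {σ R : Type*} [CommRing R] [DecidableEq σ]
    (p : MvPolynomial σ R) (i j : σ) : X i - X j ∣ p - rename (Function.update id i j) p := by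
  induction p using MvPolynomial.induction_on with
  | C a => simp
  | add p q hp hq => simpa only [map_add, add_sub_add_comm] using dvd_add hp hq
  | mul_X p k hp =>
    have hX : X i - X j ∣ X k - rename (Function.update id i j) (X k : MvPolynomial σ R) := by
      rw [rename_X]
      rcases eq_or_ne k i with rfl | hk
      · simp
      · simp [Function.update_of_ne hk]
    have : p * X k - rename (Function.update id i j) (p * X k) =
        (p - rename (Function.update id i j) p) * X k +
          rename (Function.update id i j) p * (X k - rename (Function.update id i j) (X k)) := by
      rw [map_mul]; ring
    rw [this]
    exact dvd_add (dvd_mul_of_dvd_left hp _) (dvd_mul_of_dvd_right hX _)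

theorem isSymmetric_iff_rename_swap {R : Type*} [CommSemiring R] {q : MvPolynomial (Fin 2) R} :
    q.IsSymmetric ↔ rename (Equiv.swap 0 1) q = q := by
  refine ⟨fun h => h _, fun h e => ?_⟩
  obtain rfl | rfl : e = 1 ∨ e = Equiv.swap 0 1 := by revert e; decide
  · exact rename_id_apply q
  · exact h

theorem rename_swap_eq_neg_iff {R : Type*} [CommRing R] [IsDomain R] [CharZero R]
    {m : MvPolynomial (Fin 2) R} :
    rename (Equiv.swap 0 1) m = -m ↔
      ∃ q : MvPolynomial (Fin 2) R, q.IsSymmetric ∧ m = (X 1 - X 0) * q := by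
  have hswap : rename (Equiv.swap 0 1) (X 1 - X 0 : MvPolynomial (Fin 2) R) = -(X 1 - X 0) := by
    simp
  constructor
  · intro hm
    obtain ⟨q, hq⟩ := X_sub_X_dvd_sub_rename_update m 1 0
    have hdiag : rename (Function.update id 1 0) m = 0 := by
      have hcomp : Function.update (id : Fin 2 → Fin 2) 1 0 ∘ Equiv.swap 0 1 =
          Function.update id 1 0 := by
        decide
      have h := congrArg (rename (Function.update id 1 0)) hm
      rw [rename_rename, hcomp, map_neg, eq_neg_iff_add_eq_zero, ← two_mul] at h
      exact (mul_eq_zero.1 h).resolve_left two_ne_zero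
    rw [hdiag, sub_zero] at hq
    refine ⟨q, isSymmetric_iff_rename_swap.2 ?_, hq⟩
    have hne : (X 1 - X 0 : MvPolynomial (Fin 2) R) ≠ 0 :=
      sub_ne_zero.2 (X_injective.ne (by decide))
    refine mul_left_cancel₀ (neg_ne_zero.2 hne) ?_
    calc -(X 1 - X 0) * rename (Equiv.swap 0 1) q = rename (Equiv.swap 0 1) m := by
          rw [hq, map_mul, hswap]
      _ = -(X 1 - X 0) * q := by rw [hm, hq, neg_mul]
  · rintro ⟨q, hq, rfl⟩
    rw [map_mul, hswap, isSymmetric_iff_rename_swap.1 hq, neg_mul]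

end MvPolynomial

/-- For `R = K` a faithful model of `F2 K`: `⟨a, a'⟩` stands for `L(a) + L(a') [x₂, x₁]`, and
the term `∂₂a ∂₁b` of the product comes from reordering
`x₂ʲ x₁ᵏ = x₁ᵏ x₂ʲ + jk x₁ᵏ⁻¹ x₂ʲ⁻¹ [x₂, x₁]`. -/
@[ext]
structure GrassModel (R : Type*) [CommRing R] where
  fst : MvPolynomial (Fin 2) R
  snd : MvPolynomial (Fin 2) R

namespace GrassModel

variable {R : Type*} [CommRing R]

instance : Add (GrassModel R) := ⟨fun a b => ⟨a.fst + b.fst, a.snd + b.snd⟩⟩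
instance : Zero (GrassModel R) := ⟨⟨0, 0⟩⟩
instance : Neg (GrassModel R) := ⟨fun a => ⟨-a.fst, -a.snd⟩⟩
instance : SMul R (GrassModel R) := ⟨fun k a => ⟨k • a.fst, k • a.snd⟩⟩
instance : One (GrassModel R) := ⟨⟨1, 0⟩⟩
instance : Mul (GrassModel R) :=
  ⟨fun a b => ⟨a.fst * b.fst,
    a.fst * b.snd + a.snd * b.fst + pderiv 1 a.fst * pderiv 0 b.fst⟩⟩

@[simp] lemma add_fst (a b : GrassModel R) : (a + b).fst = a.fst + b.fst := rfl
@[simp] lemma add_snd (a b : GrassModel R) : (a + b).snd = a.snd + b.snd := rfl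
@[simp] lemma zero_fst : (0 : GrassModel R).fst = 0 := rfl
@[simp] lemma zero_snd : (0 : GrassModel R).snd = 0 := rfl
@[simp] lemma neg_fst (a : GrassModel R) : (-a).fst = -a.fst := rfl
@[simp] lemma neg_snd (a : GrassModel R) : (-a).snd = -a.snd := rfl
@[simp] lemma smul_fst (k : R) (a : GrassModel R) : (k • a).fst = k • a.fst := rfl
@[simp] lemma smul_snd (k : R) (a : GrassModel R) : (k • a).snd = k • a.snd := rfl
@[simp] lemma one_fst : (1 : GrassModel R).fst = 1 := rfl
@[simp] lemma one_snd : (1 : GrassModel R).snd = 0 := rfl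
@[simp] lemma mul_fst (a b : GrassModel R) : (a * b).fst = a.fst * b.fst := rfl
@[simp] lemma mul_snd (a b : GrassModel R) :
    (a * b).snd = a.fst * b.snd + a.snd * b.fst + pderiv 1 a.fst * pderiv 0 b.fst := rfl

instance : AddCommGroup (GrassModel R) where
  add_assoc a b c := by ext1 <;> simp [add_assoc]
  zero_add a := by ext1 <;> simp
  add_zero a := by ext1 <;> simp
  add_comm a b := by ext1 <;> simp [add_comm]
  neg_add_cancel a := by ext1 <;> simp
  nsmul := nsmulRec
  zsmul := zsmulRec

@[simp] lemma sub_fst (a b : GrassModel R) : (a - b).fst = a.fst - b.fst := by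
  rw [sub_eq_add_neg, sub_eq_add_neg]; rfl
@[simp] lemma sub_snd (a b : GrassModel R) : (a - b).snd = a.snd - b.snd := by
  rw [sub_eq_add_neg, sub_eq_add_neg]; rfl

instance : Ring (GrassModel R) where
  left_distrib a b c := by ext1 <;> simp <;> ring
  right_distrib a b c := by ext1 <;> simp <;> ring
  zero_mul a := by ext1 <;> simp
  mul_zero a := by ext1 <;> simp
  mul_assoc a b c := by ext1 <;> simp <;> ring
  one_mul a := by ext1 <;> simp
  mul_one a := by ext1 <;> simp

instance : Algebra R (GrassModel R) where
  algebraMap :=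
  { toFun k := ⟨C k, 0⟩
    map_one' := by ext1 <;> simp
    map_mul' k l := by ext1 <;> simp
    map_zero' := by ext1 <;> simp
    map_add' k l := by ext1 <;> simp }
  commutes' k a := by ext1 <;> simp [mul_comm]
  smul_def' k a := by ext1 <;> simp [smul_eq_C_mul]

theorem commutator_commute (a b c : GrassModel R) : Commute (a * b - b * a) c := by
  refine GrassModel.ext ?_ ?_ <;> simp <;> ring

variable (R) in
def fstAlgHom : GrassModel R →ₐ[R] MvPolynomial (Fin 2) R where
  toFun := fst
  map_one' := rfl
  map_mul' _ _ := rfl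
  map_zero' := rfl
  map_add' _ _ := rfl
  commutes' _ := rfl

theorem mk_zero_mul_mk_zero {a b : MvPolynomial (Fin 2) R} (h : pderiv 1 a * pderiv 0 b = 0) :
    (⟨a, 0⟩ : GrassModel R) * ⟨b, 0⟩ = ⟨a * b, 0⟩ := by
  ext1 <;> simp [h]

theorem mk_X_pow (i : Fin 2) (n : ℕ) : (⟨X i, 0⟩ : GrassModel R) ^ n = ⟨X i ^ n, 0⟩ := by
  induction n with
  | zero => rfl
  | succ n ih =>
    rw [pow_succ, ih, mk_zero_mul_mk_zero, pow_succ]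
    match i with
    | 0 => simp [pderiv_X_of_ne (show (0 : Fin 2) ≠ 1 by decide)]
    | 1 => simp [pderiv_X_of_ne (show (1 : Fin 2) ≠ 0 by decide)]

end GrassModel

namespace F2

variable {K : Type*} [Field K]

variable (K) in
def commGen : F2 K := X2 K 1 * X2 K 0 - X2 K 0 * X2 K 1

variable (K) in
def orderedMonomial (m : Fin 2 →₀ ℕ) : F2 K := X2 K 0 ^ m 0 * X2 K 1 ^ m 1

variable (K) in
def L2Linear : MvPolynomial (Fin 2) K →ₗ[K] F2 K :=
  Finsupp.linearCombination K (orderedMonomial K) ∘ₗ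
    (AddMonoidAlgebra.coeffLinearEquiv K).toLinearMap

theorem L2_add (p q : MvPolynomial (Fin 2) K) : L2 K (p + q) = L2 K p + L2 K q :=
  map_add (L2Linear K) p q

theorem L2_smul (k : K) (p : MvPolynomial (Fin 2) K) : L2 K (k • p) = k • L2 K p :=
  map_smul (L2Linear K) k p

theorem L2_neg (p : MvPolynomial (Fin 2) K) : L2 K (-p) = -L2 K p := map_neg (L2Linear K) p

theorem L2_zero : L2 K 0 = 0 := map_zero (L2Linear K)

theorem L2_monomial (m : Fin 2 →₀ ℕ) (k : K) :
    L2 K (monomial m k) = k • orderedMonomial K m :=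
  Finsupp.linearCombination_single K k m

theorem L2_one : L2 K 1 = 1 := by
  rw [← C_1, C_apply, L2_monomial, one_smul, orderedMonomial]
  simp

theorem commutator_commute (a b c : F2 K) : Commute (a * b - b * a) c :=
  sub_eq_zero.1 (F2_grassmann K a b c)

theorem commGen_commute (c : F2 K) : Commute (commGen K) c := commutator_commute _ _ c

theorem commGen_mul_self [CharZero K] : commGen K * commGen K = 0 := by
  have h := two_nsmul_commutator_mul_self_eq_zero commutator_commute (X2 K 1) (X2 K 0)
  rw [← Nat.cast_smul_eq_nsmul K, smul_eq_zero] at h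
  exact h.resolve_left two_ne_zero

theorem X2_one_mul_X2_zero_pow (n : ℕ) :
    X2 K 1 * X2 K 0 ^ n = X2 K 0 ^ n * X2 K 1 + n • (X2 K 0 ^ (n - 1) * commGen K) :=
  mul_pow_eq_pow_mul_add_nsmul (commGen_commute _).symm (by rw [commGen]; abel) n

theorem X2_zero_mul_orderedMonomial (m : Fin 2 →₀ ℕ) :
    X2 K 0 * orderedMonomial K m = orderedMonomial K (Finsupp.single 0 1 + m) := by
  simp [orderedMonomial, ← mul_assoc, ← pow_succ', add_comm]

theorem X2_one_mul_orderedMonomial (m : Fin 2 →₀ ℕ) :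
    X2 K 1 * orderedMonomial K m = orderedMonomial K (Finsupp.single 1 1 + m) +
      m 0 • (orderedMonomial K (m - Finsupp.single 0 1) * commGen K) := by
  simp only [orderedMonomial, ← mul_assoc, X2_one_mul_X2_zero_pow, add_mul, smul_mul_assoc]
  simp [mul_assoc, (commGen_commute _).eq, ← pow_succ', add_comm]

theorem X2_zero_mul_L2 (p : MvPolynomial (Fin 2) K) : X2 K 0 * L2 K p = L2 K (X 0 * p) := by
  induction p using MvPolynomial.induction_on' with
  | monomial m k =>
    rw [L2_monomial, mul_smul_comm, X2_zero_mul_orderedMonomial, ← pow_one (X 0),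
      ← monomial_single_add, L2_monomial]
  | add p q hp hq => rw [L2_add, mul_add, hp, hq, mul_add, L2_add]

theorem X2_one_mul_L2 (p : MvPolynomial (Fin 2) K) :
    X2 K 1 * L2 K p = L2 K (X 1 * p) + L2 K (pderiv 0 p) * commGen K := by
  induction p using MvPolynomial.induction_on' with
  | monomial m k =>
    rw [L2_monomial, mul_smul_comm, X2_one_mul_orderedMonomial, ← pow_one (X 1),
      ← monomial_single_add, L2_monomial, pderiv_monomial, L2_monomial, smul_add, mul_comm k,
      mul_smul, Nat.cast_smul_eq_nsmul, smul_comm k]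
    simp only [smul_mul_assoc]
  | add p q hp hq =>
    rw [L2_add, mul_add, hp, hq, mul_add, L2_add, map_add, L2_add, add_mul]
    abel

theorem exists_X2_mul_L2_add_L2_mul_commGen [CharZero K] (i : Fin 2)
    (p m : MvPolynomial (Fin 2) K) :
    ∃ p' m', X2 K i * (L2 K p + L2 K m * commGen K) = L2 K p' + L2 K m' * commGen K := by
  match i with
  | 0 => exact ⟨X 0 * p, X 0 * m, by rw [mul_add, ← mul_assoc, X2_zero_mul_L2, X2_zero_mul_L2]⟩
  | 1 =>
    refine ⟨X 1 * p, pderiv 0 p + X 1 * m, ?_⟩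
    rw [mul_add, ← mul_assoc, X2_one_mul_L2, X2_one_mul_L2, add_mul, mul_assoc,
      commGen_mul_self, mul_zero, add_zero, L2_add, add_mul]
    abel

theorem exists_eq_L2_add_L2_mul_commGen [CharZero K] (f : F2 K) :
    ∃ p m, f = L2 K p + L2 K m * commGen K := by
  suffices ∀ (w : FreeAlgebra K (Fin 2)) (p m : MvPolynomial (Fin 2) K),
      ∃ p' m', RingQuot.mkAlgHom K (GrassRel2 K) w * (L2 K p + L2 K m * commGen K) =
        L2 K p' + L2 K m' * commGen K by
    obtain ⟨w, rfl⟩ := RingQuot.mkAlgHom_surjective K (GrassRel2 K) f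
    simpa [L2_one, L2_zero] using this w 1 0
  intro w
  induction w using FreeAlgebra.induction with
  | grade0 k =>
    intro p m
    refine ⟨k • p, k • m, ?_⟩
    rw [AlgHom.commutes, ← Algebra.smul_def, smul_add, L2_smul, L2_smul, smul_mul_assoc]
  | grade1 i => exact exists_X2_mul_L2_add_L2_mul_commGen i
  | mul a b iha ihb =>
    intro p m
    obtain ⟨p', m', h⟩ := ihb p m
    obtain ⟨p'', m'', h'⟩ := iha p' m'
    exact ⟨p'', m'', by rw [map_mul, mul_assoc, h, h']⟩
  | add a b iha ihb =>
    intro p m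
    obtain ⟨pa, ma, ha⟩ := iha p m
    obtain ⟨pb, mb, hb⟩ := ihb p m
    refine ⟨pa + pb, ma + mb, ?_⟩
    rw [map_add, add_mul, ha, hb, L2_add, L2_add, add_mul]
    abel

variable (K) in
def toModel : F2 K →ₐ[K] GrassModel K :=
  RingQuot.liftAlgHom K ⟨FreeAlgebra.lift K fun i => ⟨X i, 0⟩, by
    rintro _ _ ⟨a, b, c, rfl, rfl⟩
    simp only [map_sub, map_mul, map_zero]
    exact sub_eq_zero.2 (GrassModel.commutator_commute _ _ _).eq⟩

variable (K) in
def abelianize : F2 K →ₐ[K] MvPolynomial (Fin 2) K :=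
  (GrassModel.fstAlgHom K).comp (toModel K)

theorem toModel_X2 (i : Fin 2) : toModel K (X2 K i) = ⟨X i, 0⟩ := by
  rw [toModel, X2, RingQuot.liftAlgHom_mkAlgHom_apply, FreeAlgebra.lift_ι_apply]

theorem toModel_L2 (p : MvPolynomial (Fin 2) K) : toModel K (L2 K p) = ⟨p, 0⟩ := by
  induction p using MvPolynomial.induction_on' with
  | monomial m k =>
    rw [L2_monomial, map_smul, orderedMonomial, map_mul, map_pow, map_pow, toModel_X2, toModel_X2,
      GrassModel.mk_X_pow, GrassModel.mk_X_pow, GrassModel.mk_zero_mul_mk_zero]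
    · ext1
      · simp [monomial_eq, Finsupp.prod_fintype, smul_eq_C_mul]
      · simp
    · simp [pderiv_X_of_ne (show (0 : Fin 2) ≠ 1 by decide)]
  | add p q hp hq => rw [L2_add, map_add, hp, hq]; ext1 <;> simp

theorem toModel_commGen : toModel K (commGen K) = ⟨0, 1⟩ := by
  ext1 <;> simp [commGen, toModel_X2, mul_comm, pderiv_X_of_ne (show (0 : Fin 2) ≠ 1 by decide)]

theorem toModel_L2_mul_commGen (m : MvPolynomial (Fin 2) K) :
    toModel K (L2 K m * commGen K) = ⟨0, m⟩ := by
  ext1 <;> simp [toModel_L2, toModel_commGen]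

theorem abelianize_L2 (p : MvPolynomial (Fin 2) K) : abelianize K (L2 K p) = p := by
  rw [abelianize, AlgHom.comp_apply, toModel_L2]; rfl

theorem abelianize_X2 (i : Fin 2) : abelianize K (X2 K i) = X i := by
  rw [abelianize, AlgHom.comp_apply, toModel_X2]; rfl

theorem abelianize_commGen : abelianize K (commGen K) = 0 := by
  rw [abelianize, AlgHom.comp_apply, toModel_commGen]; rfl

theorem mul_commGen_eq_L2_abelianize_mul_commGen [CharZero K] (f : F2 K) :
    f * commGen K = L2 K (abelianize K f) * commGen K := by
  obtain ⟨p, m, rfl⟩ := exists_eq_L2_add_L2_mul_commGen f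
  rw [map_add, map_mul, abelianize_L2, abelianize_L2, abelianize_commGen, mul_zero, add_zero,
    add_mul, mul_assoc, commGen_mul_self, mul_zero, add_zero]

theorem L2_mul_commGen_injective : Function.Injective fun m => L2 K m * commGen K := by
  intro m m' h
  simpa [toModel_L2_mul_commGen] using congrArg (fun f => (toModel K f).snd) h

theorem commIdeal2_le_ker_abelianize : commIdeal2 K ≤ TwoSidedIdeal.ker (abelianize K) := by
  refine TwoSidedIdeal.span_le.2 ?_
  rintro _ ⟨u, v, rfl⟩
  rw [SetLike.mem_coe, TwoSidedIdeal.mem_ker, map_sub, map_mul, map_mul, mul_comm, sub_self]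

theorem exists_eq_L2_mul_commGen_of_mem [CharZero K] {f : F2 K} (hf : f ∈ commIdeal2 K) :
    ∃ m, f = L2 K m * commGen K := by
  obtain ⟨p, m, rfl⟩ := exists_eq_L2_add_L2_mul_commGen f
  have hp : p = 0 := by
    simpa [abelianize_L2, abelianize_commGen] using
      (TwoSidedIdeal.mem_ker _).1 (commIdeal2_le_ker_abelianize hf)
  exact ⟨m, by rw [hp, L2_zero, zero_add]⟩

theorem swapAut2_X2 (i : Fin 2) : swapAut2 K (X2 K i) = X2 K (Equiv.swap 0 1 i) := by
  rw [swapAut2, X2, RingQuot.liftAlgHom_mkAlgHom_apply, FreeAlgebra.lift_ι_apply]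

theorem swapAut2_commGen : swapAut2 K (commGen K) = -commGen K := by
  simp [commGen, swapAut2_X2]

theorem abelianize_swapAut2 (f : F2 K) :
    abelianize K (swapAut2 K f) = rename (Equiv.swap 0 1) (abelianize K f) := by
  suffices (abelianize K).comp (swapAut2 K) = (rename (Equiv.swap 0 1)).comp (abelianize K) from
    AlgHom.congr_fun this f
  refine RingQuot.ringQuot_ext' K _ _ (FreeAlgebra.hom_ext (funext fun i => ?_))
  show abelianize K (swapAut2 K (X2 K i)) = rename _ (abelianize K (X2 K i))
  rw [swapAut2_X2, abelianize_X2, abelianize_X2, rename_X]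

theorem swapAut2_L2_mul_commGen [CharZero K] (m : MvPolynomial (Fin 2) K) :
    swapAut2 K (L2 K m * commGen K) = L2 K (-rename (Equiv.swap 0 1) m) * commGen K := by
  -- `rw [mul_neg]` fails here: it does not unfold the `Neg` instance of `RingQuot`
  calc swapAut2 K (L2 K m * commGen K) = -(swapAut2 K (L2 K m) * commGen K) := by
        rw [map_mul, swapAut2_commGen]; exact mul_neg (swapAut2 K (L2 K m)) (commGen K)
    _ = -(L2 K (rename (Equiv.swap 0 1) m) * commGen K) := by
        rw [mul_commGen_eq_L2_abelianize_mul_commGen, abelianize_swapAut2, abelianize_L2]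
    _ = L2 K (-rename (Equiv.swap 0 1) m) * commGen K := by
        rw [L2_neg]; exact (neg_mul (L2 K (rename (Equiv.swap 0 1) m)) (commGen K)).symm

theorem L2_mul_X2_sub_X2_mul_commGen [CharZero K] (q : MvPolynomial (Fin 2) K) :
    L2 K q * ((X2 K 1 - X2 K 0) * (X2 K 1 * X2 K 0 - X2 K 0 * X2 K 1)) =
      L2 K ((X 1 - X 0) * q) * commGen K := by
  rw [← commGen, ← mul_assoc, mul_commGen_eq_L2_abelianize_mul_commGen, map_mul, abelianize_L2,
    map_sub, abelianize_X2, abelianize_X2, mul_comm]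

end F2

end

/-- An element `f` of the commutator ideal `F2'` is fixed by the automorphism exchanging
`x₁` and `x₂` if and only if `f = L(q)·(x₂ − x₁)·[x₂,x₁]` for some symmetric polynomial
`q ∈ K[x₁,x₂]`. -/
theorem symm_commIdeal2_char (K : Type*) [Field K] [CharZero K] :
    ∀ f ∈ commIdeal2 K,
      (swapAut2 K f = f ↔
        ∃ q : MvPolynomial (Fin 2) K, q.IsSymmetric ∧
          f = L2 K q * ((X2 K 1 - X2 K 0) * (X2 K 1 * X2 K 0 - X2 K 0 * X2 K 1))) := by
  intro f hf
  obtain ⟨m, rfl⟩ := F2.exists_eq_L2_mul_commGen_of_mem hf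
  simp_rw [F2.swapAut2_L2_mul_commGen, F2.L2_mul_X2_sub_X2_mul_commGen,
    F2.L2_mul_commGen_injective.eq_iff, neg_eq_iff_eq_neg]
  exact MvPolynomial.rename_swap_eq_neg_iff
end

section
/- For every integer b ≥ 4, the identity f_{0,b,0} = σ_1·f_{0,b−1,0} − σ_2·f_{0,b−2,0} + σ_3·f_{0,b−3,0} holds in F_3, where σ_1 = x_1 + x_2 + x_3, σ_2 = x_1x_2 + x_1x_3 + x_2x_3, σ_3 = x_1x_2x_3 are regarded as elements of F_3. -/
/-- The elements `f_{a,b,c}` of `F3`. -/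
noncomputable def fgen (K : Type*) [Field K] (a b c : ℕ) : F3 K :=
  (X3 K 0 ^ a * X3 K 1 ^ b - X3 K 0 ^ b * X3 K 1 ^ a) * X3 K 2 ^ c *
      (X3 K 1 * X3 K 0 - X3 K 0 * X3 K 1)
    + (X3 K 0 ^ a * X3 K 2 ^ b - X3 K 0 ^ b * X3 K 2 ^ a) * X3 K 1 ^ c *
      (X3 K 2 * X3 K 0 - X3 K 0 * X3 K 2)
    + (X3 K 1 ^ a * X3 K 2 ^ b - X3 K 1 ^ b * X3 K 2 ^ a) * X3 K 0 ^ c *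
      (X3 K 2 * X3 K 1 - X3 K 1 * X3 K 2)

section Aux

variable (K : Type*) [Field K] [CharZero K]

/-- Commutators are central in `F3`. -/
private lemma cen3 (p q t : F3 K) : (p * q - q * p) * t = t * (p * q - q * p) := by
  obtain ⟨p, rfl⟩ := RingQuot.mkAlgHom_surjective K (GrassRel3 K) p
  obtain ⟨q, rfl⟩ := RingQuot.mkAlgHom_surjective K (GrassRel3 K) q
  obtain ⟨t, rfl⟩ := RingQuot.mkAlgHom_surjective K (GrassRel3 K) t
  have h : RingQuot.mkAlgHom K (GrassRel3 K)
        ((p * q - q * p) * t - t * (p * q - q * p)) =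
      RingQuot.mkAlgHom K (GrassRel3 K) 0 :=
    RingQuot.mkAlgHom_rel K ⟨p, q, t, rfl, rfl⟩
  simp only [map_sub, map_mul, map_zero] at h
  exact sub_eq_zero.mp h

/-- Exchange identity for products of commutators. -/
private lemma exch3 (a b c d : F3 K) :
    (a * b - b * a) * (c * d - d * c) = -((a * d - d * a) * (c * b - b * c)) := by
  have key : (a * b - b * a) * (c * d - d * c) + (a * d - d * a) * (c * b - b * c)
      = (((a * c) * b - b * (a * c)) * d - d * ((a * c) * b - b * (a * c)))
        - a * ((c * b - b * c) * d - d * (c * b - b * c))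
        - ((a * b - b * a) * d - d * (a * b - b * a)) * c := by
    simp only [mul_sub, sub_mul, mul_add, add_mul, mul_assoc]
    abel
  rw [sub_eq_zero_of_eq (cen3 K (a * c) b d), sub_eq_zero_of_eq (cen3 K c b d),
      sub_eq_zero_of_eq (cen3 K a b d)] at key
  simp only [mul_zero, zero_mul, sub_zero, zero_sub, neg_zero] at key
  exact eq_neg_of_add_eq_zero_left key

private lemma half3 (p : F3 K) (h : p = -p) : p = 0 := by
  have hpp : p + p = 0 := by nth_rewrite 1 [h]; exact neg_add_cancel p
  calc p = (2 : K)⁻¹ • ((2 : K) • p) := by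
        rw [smul_smul, inv_mul_cancel₀ (by norm_num : (2 : K) ≠ 0), one_smul]
    _ = (2 : K)⁻¹ • (p + p) := by rw [two_smul]
    _ = 0 := by rw [hpp, smul_zero]

/-- Product of two commutators with the same second entry vanishes. -/
private lemma same_snd (p q r : F3 K) : (p * q - q * p) * (r * q - q * r) = 0 :=
  half3 K _ (exch3 K p q r q)

/-- Negating the first commutator preserves annihilation. -/
private lemma neg_fst (p q κ : F3 K) (h : (p * q - q * p) * κ = 0) :
    (q * p - p * q) * κ = 0 := by
  have e : (q * p - p * q) * κ = -((p * q - q * p) * κ) := by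
    rw [sub_mul, sub_mul, neg_sub]
  rw [e, h, neg_zero]

/-- Annihilation is preserved under extra left factors of `κ`. -/
private lemma kill3 (p q κ : F3 K) (h : (p * q - q * p) * κ = 0) (r : F3 K) :
    (p * q - q * p) * (r * κ) = 0 := by
  rw [cen3 K p q (r * κ), mul_assoc, ← cen3 K p q κ, h, mul_zero]

end Aux

set_option maxHeartbeats 2000000 in
/-- For `b ≥ 4`: `f_{0,b,0} = σ₁·f_{0,b−1,0} − σ₂·f_{0,b−2,0} + σ₃·f_{0,b−3,0}` in `F3`. -/
theorem fgen_rec_zero_b (K : Type*) [Field K] [CharZero K] (b : ℕ) (hb : 4 ≤ b) :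
    fgen K 0 b 0 =
      (X3 K 0 + X3 K 1 + X3 K 2) * fgen K 0 (b - 1) 0
        - (X3 K 0 * X3 K 1 + X3 K 0 * X3 K 2 + X3 K 1 * X3 K 2) * fgen K 0 (b - 2) 0
        + (X3 K 0 * X3 K 1 * X3 K 2) * fgen K 0 (b - 3) 0 := by
  obtain ⟨n, rfl⟩ : ∃ n, b = n + 3 := ⟨b - 3, by omega⟩
  simp only [show n + 3 - 1 = n + 2 by omega, show n + 3 - 2 = n + 1 by omega,
    show n + 3 - 3 = n by omega]
  simp only [fgen, pow_zero, one_mul, mul_one]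
  set x := X3 K 0 with hxdef
  set y := X3 K 1 with hydef
  set z := X3 K 2 with hzdef
  -- abbreviations for the three basic commutators
  -- u = y*x - x*y, v = z*x - x*z, w = z*y - y*z
  -- zero products of commutators
  have hZYu : (z * y - y * z) * (y * x - x * y) = 0 := by
    have := exch3 K z y y x; simpa using this
  have hYZu : (y * z - z * y) * (y * x - x * y) = 0 := neg_fst K z y _ hZYu
  have hYXu : (y * x - x * y) * (y * x - x * y) = 0 := same_snd K y x y
  have hXYu : (x * y - y * x) * (y * x - x * y) = 0 := neg_fst K y x _ hYXu
  have hXZu : (x * z - z * x) * (y * x - x * y) = 0 := by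
    have := exch3 K x z y x; simpa using this
  have hXYv : (x * y - y * x) * (z * x - x * z) = 0 := by
    have := exch3 K x y z x; simpa using this
  have hXZv : (x * z - z * x) * (z * x - x * z) = 0 := by
    have := exch3 K x z z x; simpa using this
  have hZYw : (z * y - y * z) * (z * y - y * z) = 0 := same_snd K z y z
  have hYZw : (y * z - z * y) * (z * y - y * z) = 0 := neg_fst K z y _ hZYw
  -- self-power commutators vanish identically
  have hYB : y * y ^ n - y ^ n * y = 0 := sub_eq_zero.mpr (by rw [← pow_succ', pow_succ])
  have hXA : x * x ^ n - x ^ n * x = 0 := sub_eq_zero.mpr (by rw [← pow_succ', pow_succ])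
  have hZC : z * z ^ n - z ^ n * z = 0 := sub_eq_zero.mpr (by rw [← pow_succ', pow_succ])
  -- the sum of correction terms vanishes
  have E : (-(-(x * ((y * y ^ n - y ^ n * y) * (y * (y * x - x * y))))
          + (y * y ^ n - y ^ n * y) * ((y * y) * (y * x - x * y))
          - z * ((y * y ^ n - y ^ n * y) * (y * (y * x - x * y)))
          + (z * y - y * z) * ((y ^ n * y) * (y * x - x * y))
          + x * ((y * z - z * y) * (y ^ n * (y * x - x * y)))
          + x * (z * ((y * y ^ n - y ^ n * y) * (y * x - x * y))))
        + ((x * x ^ n - x ^ n * x) * ((x * x) * (y * x - x * y))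
          - y * ((x * x ^ n - x ^ n * x) * (x * (y * x - x * y)))
          - (x * y - y * x) * ((x ^ n * x) * (y * x - x * y))
          - z * ((x * x ^ n - x ^ n * x) * (x * (y * x - x * y)))
          - (x * z - z * x) * ((x ^ n * x) * (y * x - x * y))
          + (x * y - y * x) * ((z * x ^ n) * (y * x - x * y))
          + y * ((x * z - z * x) * (x ^ n * (y * x - x * y)))
          + y * (z * ((x * x ^ n - x ^ n * x) * (y * x - x * y))))
        - ((z * z ^ n - z ^ n * z) * ((z * z) * (z * x - x * z))
          - x * ((z * z ^ n - z ^ n * z) * (z * (z * x - x * z)))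
          - y * ((z * z ^ n - z ^ n * z) * (z * (z * x - x * z)))
          + x * (y * ((z * z ^ n - z ^ n * z) * (z * x - x * z))))
        + ((x * x ^ n - x ^ n * x) * ((x * x) * (z * x - x * z))
          - y * ((x * x ^ n - x ^ n * x) * (x * (z * x - x * z)))
          - (x * y - y * x) * ((x ^ n * x) * (z * x - x * z))
          - z * ((x * x ^ n - x ^ n * x) * (x * (z * x - x * z)))
          - (x * z - z * x) * ((x ^ n * x) * (z * x - x * z))
          + (x * y - y * x) * ((z * x ^ n) * (z * x - x * z))
          + y * ((x * z - z * x) * (x ^ n * (z * x - x * z)))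
          + y * (z * ((x * x ^ n - x ^ n * x) * (z * x - x * z))))
        - ((z * z ^ n - z ^ n * z) * ((z * z) * (z * y - y * z))
          - x * ((z * z ^ n - z ^ n * z) * (z * (z * y - y * z)))
          - y * ((z * z ^ n - z ^ n * z) * (z * (z * y - y * z)))
          + x * (y * ((z * z ^ n - z ^ n * z) * (z * y - y * z))))
        + (-(x * ((y * y ^ n - y ^ n * y) * (y * (z * y - y * z))))
          + (y * y ^ n - y ^ n * y) * ((y * y) * (z * y - y * z))
          - z * ((y * y ^ n - y ^ n * y) * (y * (z * y - y * z)))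
          + (z * y - y * z) * ((y ^ n * y) * (z * y - y * z))
          + x * ((y * z - z * y) * (y ^ n * (z * y - y * z)))
          + x * (z * ((y * y ^ n - y ^ n * y) * (z * y - y * z))))) = (0 : F3 K) := by
    simp only [hYB, hXA, hZC, kill3 K z y _ hZYu, kill3 K y z _ hYZu, kill3 K x y _ hXYu,
      kill3 K x z _ hXZu, kill3 K x y _ hXYv, kill3 K x z _ hXZv, kill3 K z y _ hZYw,
      kill3 K y z _ hYZw, zero_mul, mul_zero, neg_zero, add_zero, zero_add, sub_zero,
      zero_sub, neg_neg, sub_self]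
  refine sub_eq_zero.mp ?_
  rw [← E]
  simp only [show n + 3 = n + 1 + 1 + 1 by omega, show n + 2 = n + 1 + 1 by omega, pow_succ]
  simp only [mul_sub, sub_mul, mul_add, add_mul, mul_assoc]
  abel
end

section
/- For every integer a ≥ 1, the identity f_{a,3,0} = σ_1·f_{a,2,0} − σ_2·f_{a,1,0} − σ_3·f_{0,a,0} holds in F_3, where σ_1 = x_1 + x_2 + x_3, σ_2 = x_1x_2 + x_1x_3 + x_2x_3, σ_3 = x_1x_2x_3 are regarded as elements of F_3. -/
section Helpers

variable {R : Type*} [Ring R]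

/-- In an algebra over a characteristic-zero field in which all commutators are central,
the product of two commutators with a common entry vanishes. -/
theorem my_shared (K : Type*) [Field K] [CharZero K] {R : Type*} [Ring R] [Algebra K R]
    (hcen : ∀ a b t : R, (a*b - b*a) * t = t * (a*b - b*a))
    (p q r : R) : (p*q - q*p) * (p*r - r*p) = 0 := by
  have hqc : q * (p*r - r*p) = (p*(q*r) - (q*r)*p) - (p*q - q*p)*r := by noncomm_ring
  have h2 : p * (q * (p*r - r*p)) - (q * (p*r - r*p)) * p
      = (p*(p*(q*r) - (q*r)*p) - (p*(q*r) - (q*r)*p)*p)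
        - (p*((p*q - q*p)*r) - ((p*q - q*p)*r)*p) := by rw [hqc]; noncomm_ring
  have h3 : p*(p*(q*r) - (q*r)*p) - (p*(q*r) - (q*r)*p)*p = 0 := by
    rw [hcen p (q*r) p, sub_self]
  have h4 : p*((p*q - q*p)*r) - ((p*q - q*p)*r)*p = (p*q - q*p)*(p*r - r*p) := by
    calc p*((p*q - q*p)*r) - ((p*q - q*p)*r)*p
        = (p*(p*q - q*p))*r - (p*q - q*p)*(r*p) := by noncomm_ring
      _ = ((p*q - q*p)*p)*r - (p*q - q*p)*(r*p) := by rw [← hcen p q p]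
      _ = (p*q - q*p)*(p*r - r*p) := by noncomm_ring
  have h5 : p * (q * (p*r - r*p)) - (q * (p*r - r*p)) * p = (p*q - q*p)*(p*r - r*p) := by
    calc p * (q * (p*r - r*p)) - (q * (p*r - r*p)) * p
        = (p*q)*(p*r - r*p) - q*((p*r - r*p)*p) := by noncomm_ring
      _ = (p*q)*(p*r - r*p) - q*(p*(p*r - r*p)) := by rw [hcen p r p]
      _ = (p*q - q*p)*(p*r - r*p) := by noncomm_ring
  have hsum : (p*q - q*p)*(p*r - r*p) + (p*q - q*p)*(p*r - r*p) = 0 := by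
    have h := h2
    rw [h5, h3, h4, zero_sub] at h
    exact eq_neg_iff_add_eq_zero.mp h
  have h2v : (2:K) • ((p*q - q*p)*(p*r - r*p)) = 0 := by rw [two_smul]; exact hsum
  calc (p*q - q*p)*(p*r - r*p) = (2⁻¹:K) • ((2:K) • ((p*q - q*p)*(p*r - r*p))) := by
        rw [smul_smul]; norm_num
    _ = 0 := by rw [h2v, smul_zero]

theorem Zflip2 {p q r s : R} (h : (p*q - q*p)*(r*s - s*r) = 0) :
    (q*p - p*q)*(s*r - r*s) = 0 := by
  rw [← neg_sub (p*q) (q*p), ← neg_sub (r*s) (s*r), neg_mul_neg]; exact h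

theorem Zflipr {p q r s : R} (h : (p*q - q*p)*(r*s - s*r) = 0) :
    (p*q - q*p)*(s*r - r*s) = 0 := by
  rw [← neg_sub (r*s) (s*r), mul_neg, h, neg_zero]

theorem Zswap' (c p q : R) (h : (p*q - q*p)*c = 0) : (q*p - p*q)*c = 0 := by
  have e : (q*p - p*q)*c = -((p*q - q*p)*c) := by noncomm_ring
  rw [e, h, neg_zero]

theorem ZmulR' (c p q : R) (hc : ∀ t, c*t = t*c) (h : (p*q - q*p)*c = 0) (t : R) :
    ((p*q - q*p)*t)*c = 0 := by
  rw [mul_assoc, ← hc t, ← mul_assoc, h, zero_mul]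

theorem Zself' (c p : R) (n : ℕ) : (p*p^n - p^n*p)*c = 0 := by
  have h : p*p^n - p^n*p = 0 := by rw [← pow_succ', ← pow_succ, sub_self]
  rw [h, zero_mul]

theorem Zpow' (c p q : R) (hc : ∀ t, c*t = t*c) (h : (q*p - p*q)*c = 0) :
    ∀ n : ℕ, (q*p^n - p^n*q)*c = 0 := by
  intro n
  induction n with
  | zero => simp
  | succ n ih =>
      have expand : (q*p^(n+1) - p^(n+1)*q)*c
          = ((q*p^n - p^n*q)*p)*c + p^n*((q*p - p*q)*c) := by
        rw [pow_succ]; noncomm_ring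
      rw [expand, ZmulR' c q (p^n) hc ih p, h, mul_zero, add_zero]

theorem Zadd' (c p q r : R) (h1 : (p*q - q*p)*c = 0) (h2 : (r*q - q*r)*c = 0) :
    ((p+r)*q - q*(p+r))*c = 0 := by
  have e : ((p+r)*q - q*(p+r))*c = (p*q - q*p)*c + (r*q - q*r)*c := by noncomm_ring
  rw [e, h1, h2, add_zero]

theorem Zmull' (c p r q : R) (hc : ∀ t, c*t = t*c) (h1 : (p*q - q*p)*c = 0)
    (h2 : (r*q - q*r)*c = 0) : ((p*r)*q - q*(p*r))*c = 0 := by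
  have e : ((p*r)*q - q*(p*r))*c = p*((r*q - q*r)*c) + ((p*q - q*p)*r)*c := by noncomm_ring
  rw [e, h2, mul_zero, ZmulR' c p q hc h1 r, add_zero]

theorem Px0 (c x y z : R) (hc : ∀ t, c*t = t*c)
    (hxy : (x*y - y*x)*c = 0) (hxz : (x*z - z*x)*c = 0) :
    (x^3 - (x+y+z)*x^2 + (x*y+x*z+y*z)*x - x*y*z)*c = 0 := by
  have e : (x^3 - (x+y+z)*x^2 + (x*y+x*z+y*z)*x - x*y*z)*c
      = ((x*y - y*x)*x)*c + ((x*z - z*x)*x)*c + y*((z*x - x*z)*c) + ((y*x - x*y)*z)*c := by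
    noncomm_ring
  rw [e, ZmulR' c x y hc hxy x, ZmulR' c x z hc hxz x, Zswap' c x z hxz, mul_zero,
    ZmulR' c y x hc (Zswap' c x y hxy) z]
  simp

theorem Py0 (c x y z : R) (hc : ∀ t, c*t = t*c) (hyz : (y*z - z*y)*c = 0) :
    (y^3 - (x+y+z)*y^2 + (x*y+x*z+y*z)*y - x*y*z)*c = 0 := by
  have e : (y^3 - (x+y+z)*y^2 + (x*y+x*z+y*z)*y - x*y*z)*c
      = ((y*z - z*y)*y)*c + x*((z*y - y*z)*c) := by noncomm_ring
  rw [e, ZmulR' c y z hc hyz y, Zswap' c y z hyz, mul_zero, add_zero]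

theorem Pz0 (c x y z : R) : (z^3 - (x+y+z)*z^2 + (x*y+x*z+y*z)*z - x*y*z)*c = 0 := by
  have e : (z^3 - (x+y+z)*z^2 + (x*y+x*z+y*z)*z - x*y*z) = (0:R) := by noncomm_ring
  rw [e, zero_mul]

theorem main_c (c X Y u v s1 s2 s3 : R) (hc : ∀ t, c*t = t*c)
    (hPu : (u^3 - s1*u^2 + s2*u - s3)*c = 0)
    (hPv : (v^3 - s1*v^2 + s2*v - s3)*c = 0)
    (h1 : (s1*X - X*s1)*c = 0) (h2 : (s2*X - X*s2)*c = 0) (h3 : (s3*X - X*s3)*c = 0) :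
    (X*v^3 - u^3*Y)*c = s1*((X*v^2 - u^2*Y)*c) - s2*((X*v - u*Y)*c) - s3*((Y - X)*c) := by
  have key : s1*((X*v^2 - u^2*Y)*c) - s2*((X*v - u*Y)*c) - s3*((Y - X)*c) - (X*v^3 - u^3*Y)*c
      = -(X*((v^3 - s1*v^2 + s2*v - s3)*c)) + ((s1*X - X*s1)*v^2)*c - ((s2*X - X*s2)*v)*c
        + (s3*X - X*s3)*c + (u^3 - s1*u^2 + s2*u - s3)*(Y*c) := by noncomm_ring
  have hY : (u^3 - s1*u^2 + s2*u - s3)*(Y*c) = 0 := by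
    rw [← hc Y, ← mul_assoc, hPu, zero_mul]
  have h0 : s1*((X*v^2 - u^2*Y)*c) - s2*((X*v - u*Y)*c) - s3*((Y - X)*c)
      - (X*v^3 - u^3*Y)*c = 0 := by
    rw [key, hPv, mul_zero, neg_zero, ZmulR' c s1 X hc h1 (v^2), ZmulR' c s2 X hc h2 v,
      h3, hY]
    simp
  exact (sub_eq_zero.mp h0).symm

end Helpers

/-- For `a ≥ 1`: `f_{a,3,0} = σ₁·f_{a,2,0} − σ₂·f_{a,1,0} − σ₃·f_{0,a,0}` in `F3`. -/
theorem fgen_a_three (K : Type*) [Field K] [CharZero K] (a : ℕ) (ha : 1 ≤ a) :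
    fgen K a 3 0 =
      (X3 K 0 + X3 K 1 + X3 K 2) * fgen K a 2 0
        - (X3 K 0 * X3 K 1 + X3 K 0 * X3 K 2 + X3 K 1 * X3 K 2) * fgen K a 1 0
        - (X3 K 0 * X3 K 1 * X3 K 2) * fgen K 0 a 0 := by
  have hcen : ∀ p q t : F3 K, (p*q - q*p)*t = t*(p*q - q*p) := by
    intro p q t
    obtain ⟨p', rfl⟩ := RingQuot.mkAlgHom_surjective K (GrassRel3 K) p
    obtain ⟨q', rfl⟩ := RingQuot.mkAlgHom_surjective K (GrassRel3 K) q
    obtain ⟨t', rfl⟩ := RingQuot.mkAlgHom_surjective K (GrassRel3 K) t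
    have h : RingQuot.mkAlgHom K (GrassRel3 K) ((p'*q' - q'*p')*t' - t'*(p'*q' - q'*p'))
        = RingQuot.mkAlgHom K (GrassRel3 K) 0 :=
      RingQuot.mkAlgHom_rel K ⟨p', q', t', rfl, rfl⟩
    rw [map_zero, map_sub, sub_eq_zero] at h
    simpa [map_mul, map_sub] using h
  simp only [fgen, pow_zero, pow_one, mul_one, one_mul]
  set x := X3 K 0 with hxdef
  set y := X3 K 1 with hydef
  set z := X3 K 2 with hzdef
  have hc1 : ∀ t : F3 K, (y*x - x*y)*t = t*(y*x - x*y) := hcen y x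
  have hc2 : ∀ t : F3 K, (z*x - x*z)*t = t*(z*x - x*z) := hcen z x
  have hc3 : ∀ t : F3 K, (z*y - y*z)*t = t*(z*y - y*z) := hcen z y
  -- commutator products with a shared generator vanish
  have Zyx1 : (y*x - x*y)*(y*x - x*y) = 0 := my_shared K hcen y x x
  have Zxy1 := Zswap' _ _ _ Zyx1
  have Zzx1 : (z*x - x*z)*(y*x - x*y) = 0 := Zflip2 (my_shared K hcen x z y)
  have Zxz1 := Zswap' _ _ _ Zzx1
  have Zyz1 : (y*z - z*y)*(y*x - x*y) = 0 := my_shared K hcen y z x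
  have Zzx2 : (z*x - x*z)*(z*x - x*z) = 0 := my_shared K hcen z x x
  have Zxz2 := Zswap' _ _ _ Zzx2
  have Zyx2 : (y*x - x*y)*(z*x - x*z) = 0 := Zflip2 (my_shared K hcen x y z)
  have Zxy2 := Zswap' _ _ _ Zyx2
  have Zzy3 : (z*y - y*z)*(z*y - y*z) = 0 := my_shared K hcen z y y
  have Zyz3 := Zswap' _ _ _ Zzy3
  have Zyx3 : (y*x - x*y)*(z*y - y*z) = 0 := Zflipr (my_shared K hcen y x z)
  have Zxy3 := Zswap' _ _ _ Zyx3
  -- powers of generators commute with generators modulo each commutator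
  have Pxx1 : (x*x^a - x^a*x)*(y*x - x*y) = 0 := Zself' _ x a
  have Pyx1 : (y*x^a - x^a*y)*(y*x - x*y) = 0 := Zpow' _ x y hc1 Zyx1 a
  have Pzx1 : (z*x^a - x^a*z)*(y*x - x*y) = 0 := Zpow' _ x z hc1 Zzx1 a
  have Pxx2 : (x*x^a - x^a*x)*(z*x - x*z) = 0 := Zself' _ x a
  have Pyx2 : (y*x^a - x^a*y)*(z*x - x*z) = 0 := Zpow' _ x y hc2 Zyx2 a
  have Pzx2 : (z*x^a - x^a*z)*(z*x - x*z) = 0 := Zpow' _ x z hc2 Zzx2 a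
  have Pxy3 : (x*y^a - y^a*x)*(z*y - y*z) = 0 := Zpow' _ y x hc3 Zxy3 a
  have Pyy3 : (y*y^a - y^a*y)*(z*y - y*z) = 0 := Zself' _ y a
  have Pzy3 : (z*y^a - y^a*z)*(z*y - y*z) = 0 := Zpow' _ y z hc3 Zzy3 a
  -- the elementary symmetric elements commute with the relevant powers
  have S1X1 : ((x+y+z)*x^a - x^a*(x+y+z))*(y*x - x*y) = 0 :=
    Zadd' _ (x+y) (x^a) z (Zadd' _ x (x^a) y Pxx1 Pyx1) Pzx1
  have Mxy1 : ((x*y)*x^a - x^a*(x*y))*(y*x - x*y) = 0 := Zmull' _ x y (x^a) hc1 Pxx1 Pyx1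
  have Mxz1 : ((x*z)*x^a - x^a*(x*z))*(y*x - x*y) = 0 := Zmull' _ x z (x^a) hc1 Pxx1 Pzx1
  have Myz1 : ((y*z)*x^a - x^a*(y*z))*(y*x - x*y) = 0 := Zmull' _ y z (x^a) hc1 Pyx1 Pzx1
  have S2X1 : ((x*y+x*z+y*z)*x^a - x^a*(x*y+x*z+y*z))*(y*x - x*y) = 0 :=
    Zadd' _ (x*y+x*z) (x^a) (y*z) (Zadd' _ (x*y) (x^a) (x*z) Mxy1 Mxz1) Myz1
  have S3X1 : ((x*y*z)*x^a - x^a*(x*y*z))*(y*x - x*y) = 0 :=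
    Zmull' _ (x*y) z (x^a) hc1 Mxy1 Pzx1
  have S1X2 : ((x+y+z)*x^a - x^a*(x+y+z))*(z*x - x*z) = 0 :=
    Zadd' _ (x+y) (x^a) z (Zadd' _ x (x^a) y Pxx2 Pyx2) Pzx2
  have Mxy2 : ((x*y)*x^a - x^a*(x*y))*(z*x - x*z) = 0 := Zmull' _ x y (x^a) hc2 Pxx2 Pyx2
  have Mxz2 : ((x*z)*x^a - x^a*(x*z))*(z*x - x*z) = 0 := Zmull' _ x z (x^a) hc2 Pxx2 Pzx2
  have Myz2 : ((y*z)*x^a - x^a*(y*z))*(z*x - x*z) = 0 := Zmull' _ y z (x^a) hc2 Pyx2 Pzx2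
  have S2X2 : ((x*y+x*z+y*z)*x^a - x^a*(x*y+x*z+y*z))*(z*x - x*z) = 0 :=
    Zadd' _ (x*y+x*z) (x^a) (y*z) (Zadd' _ (x*y) (x^a) (x*z) Mxy2 Mxz2) Myz2
  have S3X2 : ((x*y*z)*x^a - x^a*(x*y*z))*(z*x - x*z) = 0 :=
    Zmull' _ (x*y) z (x^a) hc2 Mxy2 Pzx2
  have S1X3 : ((x+y+z)*y^a - y^a*(x+y+z))*(z*y - y*z) = 0 :=
    Zadd' _ (x+y) (y^a) z (Zadd' _ x (y^a) y Pxy3 Pyy3) Pzy3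
  have Mxy3 : ((x*y)*y^a - y^a*(x*y))*(z*y - y*z) = 0 := Zmull' _ x y (y^a) hc3 Pxy3 Pyy3
  have Mxz3 : ((x*z)*y^a - y^a*(x*z))*(z*y - y*z) = 0 := Zmull' _ x z (y^a) hc3 Pxy3 Pzy3
  have Myz3 : ((y*z)*y^a - y^a*(y*z))*(z*y - y*z) = 0 := Zmull' _ y z (y^a) hc3 Pyy3 Pzy3
  have S2X3 : ((x*y+x*z+y*z)*y^a - y^a*(x*y+x*z+y*z))*(z*y - y*z) = 0 :=
    Zadd' _ (x*y+x*z) (y^a) (y*z) (Zadd' _ (x*y) (y^a) (x*z) Mxy3 Mxz3) Myz3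
  have S3X3 : ((x*y*z)*y^a - y^a*(x*y*z))*(z*y - y*z) = 0 :=
    Zmull' _ (x*y) z (y^a) hc3 Mxy3 Pzy3
  -- Cayley–Hamilton-type facts
  have hPx1 := Px0 (y*x - x*y) x y z hc1 Zxy1 Zxz1
  have hPy1 := Py0 (y*x - x*y) x y z hc1 Zyz1
  have hPx2 := Px0 (z*x - x*z) x y z hc2 Zxy2 Zxz2
  have hPz2 := Pz0 (z*x - x*z) x y z
  have hPy3 := Py0 (z*y - y*z) x y z hc3 Zyz3
  have hPz3 := Pz0 (z*y - y*z) x y z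
  have G1 := main_c (y*x - x*y) (x^a) (y^a) x y (x+y+z) (x*y+x*z+y*z) (x*y*z)
    hc1 hPx1 hPy1 S1X1 S2X1 S3X1
  have G2 := main_c (z*x - x*z) (x^a) (z^a) x z (x+y+z) (x*y+x*z+y*z) (x*y*z)
    hc2 hPx2 hPz2 S1X2 S2X2 S3X2
  have G3 := main_c (z*y - y*z) (y^a) (z^a) y z (x+y+z) (x*y+x*z+y*z) (x*y*z)
    hc3 hPy3 hPz3 S1X3 S2X3 S3X3
  rw [G1, G2, G3]
  noncomm_ring
end
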